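/- Let R be a commutative ring that is a ℚ-algebra and let a, b ∈ R. Then the Wronskian-type identity (x²/4 − 1)·(f₂″·f₁ − f₂·f₁″) = −(1/4 + (a+b)/2)·x·(f₂′·f₁ − f₂·f₁′) holds in R[[x]]. -/

import Mathlib

open PowerSeries

noncomputable def f₁ {R : Type*} [CommRing R] [Algebra ℚ R] (a b : R) : R⟦X⟧ :=
  PowerSeries.mk fun n =>
    if n % 2 = 0 then
      ((Nat.factorial n : ℚ))⁻¹ • ∏ r ∈ Finset.range (n / 2), ((a + (r : R)) * (b + (r : R)))
    else 0

noncomputable def f₂ {R : Type*} [CommRing R] [Algebra ℚ R] (a b : R) : R⟦X⟧ :=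
  PowerSeries.mk fun n =>
    if n % 2 = 1 then
      ((Nat.factorial n : ℚ))⁻¹ • ∏ r ∈ Finset.range (n / 2),
        ((a + (r : R) + algebraMap ℚ R (1/2)) * (b + (r : R) + algebraMap ℚ R (1/2)))
    else 0

noncomputable def f₃ {R : Type*} [CommRing R] [Algebra ℚ R] (a b : R) : R⟦X⟧ :=
  PowerSeries.mk fun n =>
    if n % 2 = 0 then
      ((Nat.factorial n : ℚ))⁻¹ • ∏ r ∈ Finset.range (n / 2), ((a - (r : R)) * (b - (r : R)))
    else 0

noncomputable def f₄ {R : Type*} [CommRing R] [Algebra ℚ R] (a b : R) : R⟦X⟧ :=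
  PowerSeries.mk fun n =>
    if n % 2 = 1 then
      ((Nat.factorial n : ℚ))⁻¹ • ∏ r ∈ Finset.range (n / 2),
        ((a - (r : R) - algebraMap ℚ R (1/2)) * (b - (r : R) - algebraMap ℚ R (1/2)))
    else 0

/-!
Both f₁ and f₂ solve (x²/4 − 1) g″ + (1/4 + (a+b)/2) x g′ + a b g = 0: comparing coefficients of
xⁿ, this equation says 4 (n+1)(n+2) gₙ₊₂ = (2a+n)(2b+n) gₙ, because
n(n−1)/4 + (1/4 + (a+b)/2) n + a b = (n/2 + a)(n/2 + b), and the coefficients of f₁ (n even) and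
f₂ (n odd) are built to satisfy exactly this recurrence. Subtracting f₂ times the equation for f₁
from f₁ times the equation for f₂ cancels the a b terms and leaves the identity.
-/

open Nat

namespace PowerSeries

variable {R : Type*} [CommRing R]

theorem coeff_X_mul_derivative (g : R⟦X⟧) (n : ℕ) :
    coeff n (X * d⁄dX R g) = n * coeff n g := by
  cases n with
  | zero => simp
  | succ n => rw [coeff_succ_X_mul, coeff_derivative, mul_comm]; push_cast; ring

theorem coeff_derivative_derivative (g : R⟦X⟧) (n : ℕ) :
    coeff n (d⁄dX R (d⁄dX R g)) = (n + 1) * (n + 2) * coeff (n + 2) g := by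
  rw [coeff_derivative, coeff_derivative]; push_cast; ring

theorem coeff_X_sq_mul_derivative_derivative (g : R⟦X⟧) (n : ℕ) :
    coeff n (X ^ 2 * d⁄dX R (d⁄dX R g)) = n * (n - 1) * coeff n g := by
  rw [coeff_X_pow_mul']
  match n with
  | 0 | 1 => simp
  | n + 2 =>
    rw [if_pos (by omega), Nat.add_sub_cancel, coeff_derivative_derivative]
    push_cast
    ring

end PowerSeries

section

variable {R : Type*} [CommRing R] [Algebra ℚ R]

def SolvesODE (a b : R) (g : R⟦X⟧) : Prop :=
  ((1/4 : ℚ) • (X : R⟦X⟧) ^ 2 - 1) * d⁄dX R (d⁄dX R g) =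
    -(((1/4 : ℚ) • (1 : R⟦X⟧) + (1/2 : ℚ) • C (a + b)) * X * d⁄dX R g + C (a * b) * g)

theorem solvesODE_of_coeff_recurrence (a b : R) (g : R⟦X⟧)
    (hg : ∀ n : ℕ,
      4 * ((n + 1) * (n + 2) * coeff (n + 2) g) = (2 * a + n) * (2 * b + n) * coeff n g) :
    SolvesODE a b g := by
  ext n
  have half : algebraMap ℚ R (1/2) = 2 * algebraMap ℚ R (1/4) := by
    rw [← map_ofNat (algebraMap ℚ R) 2, ← map_mul]; norm_num
  have quarter : 4 * algebraMap ℚ R (1/4) = 1 := by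
    rw [← map_ofNat (algebraMap ℚ R) 4, ← map_mul]; norm_num
  simp only [sub_mul, add_mul, smul_mul_assoc, one_mul, mul_assoc]
  simp only [map_sub (coeff n), map_neg (coeff n), map_add (coeff n), coeff_smul, coeff_C_mul,
    coeff_X_sq_mul_derivative_derivative, coeff_X_mul_derivative, coeff_derivative_derivative]
  simp only [Algebra.smul_def, half]
  linear_combination (-algebraMap ℚ R (1/4)) * hg n
    - (a * b * coeff n g - (n + 1) * (n + 2) * coeff (n + 2) g) * quarter

theorem natCast_mul_inv_factorial_smul (n : ℕ) (x : R) :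
    ((n + 1) * (n + 2) : R) * (((n + 2)! : ℚ)⁻¹ • x) = (n ! : ℚ)⁻¹ • x := by
  have hn : ((n + 1) * (n + 2) : R) = algebraMap ℚ R ((n + 1) * (n + 2) : ℕ) := by
    rw [map_natCast]; push_cast; ring
  rw [hn, Algebra.smul_def, Algebra.smul_def, ← mul_assoc, ← map_mul, factorial_succ,
    factorial_succ]
  congr 2
  push_cast
  field_simp
  ring

theorem coeff_recurrence_of_eq_inv_factorial_smul (a b : R) (g : R⟦X⟧) (c : ℕ → R)
    (hgc : ∀ n, coeff n g = (n ! : ℚ)⁻¹ • c n)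
    (hc : ∀ n : ℕ, 4 * c (n + 2) = (2 * a + n) * (2 * b + n) * c n) (n : ℕ) :
    4 * ((n + 1) * (n + 2) * coeff (n + 2) g) = (2 * a + n) * (2 * b + n) * coeff n g := by
  rw [hgc, hgc, natCast_mul_inv_factorial_smul, mul_smul_comm, mul_smul_comm, hc]

theorem solvesODE_f₁ (a b : R) : SolvesODE a b (f₁ a b) := by
  refine solvesODE_of_coeff_recurrence a b _ (coeff_recurrence_of_eq_inv_factorial_smul a b _
    (fun n => if n % 2 = 0 then ∏ r ∈ Finset.range (n / 2), ((a + r) * (b + r)) else 0)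
    (fun n => ?_) (fun n => ?_))
  · rw [f₁, coeff_mk]
    split_ifs
    exacts [rfl, (smul_zero _).symm]
  · obtain ⟨k, rfl | rfl⟩ := Nat.even_or_odd' n
    · rw [if_pos (by omega), if_pos (by omega), show (2 * k + 2) / 2 = k + 1 by omega,
        show 2 * k / 2 = k by omega, Finset.prod_range_succ]
      push_cast
      ring
    · rw [if_neg (by omega), if_neg (by omega), mul_zero, mul_zero]

theorem solvesODE_f₂ (a b : R) : SolvesODE a b (f₂ a b) := by
  set h := algebraMap ℚ R (1/2)
  have two_mul_h : 2 * h = 1 := by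
    rw [← map_ofNat (algebraMap ℚ R) 2, ← map_mul]; norm_num
  refine solvesODE_of_coeff_recurrence a b _ (coeff_recurrence_of_eq_inv_factorial_smul a b _
    (fun n => if n % 2 = 1 then ∏ r ∈ Finset.range (n / 2), ((a + r + h) * (b + r + h)) else 0)
    (fun n => ?_) (fun n => ?_))
  · rw [f₂, coeff_mk]
    split_ifs
    exacts [rfl, (smul_zero _).symm]
  · obtain ⟨k, rfl | rfl⟩ := Nat.even_or_odd' n
    · rw [if_neg (by omega), if_neg (by omega), mul_zero, mul_zero]
    · rw [if_pos (by omega), if_pos (by omega), show (2 * k + 1 + 2) / 2 = k + 1 by omega,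
        show (2 * k + 1) / 2 = k by omega, Finset.prod_range_succ]
      push_cast
      linear_combination (∏ r ∈ Finset.range k, ((a + r + h) * (b + r + h))) *
        (2 * a + 2 * b + 4 * k + 2 * h + 1) * two_mul_h

end

/-- Wronskian identity:
`(x²/4 − 1)·(f₂″·f₁ − f₂·f₁″) = −(1/4 + (a+b)/2)·x·(f₂′·f₁ − f₂·f₁′)`. -/
theorem stmt8 {R : Type*} [CommRing R] [Algebra ℚ R] (a b : R) :
    ((1/4 : ℚ) • (PowerSeries.X : R⟦X⟧) ^ 2 - 1) *
        (d⁄dX R (d⁄dX R (f₂ a b)) * f₁ a b - f₂ a b * d⁄dX R (d⁄dX R (f₁ a b))) =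
      -(((1/4 : ℚ) • (1 : R⟦X⟧) + (1/2 : ℚ) • C (a + b)) * PowerSeries.X *
          (d⁄dX R (f₂ a b) * f₁ a b - f₂ a b * d⁄dX R (f₁ a b))) := by
  have h₁ := solvesODE_f₁ a b
  have h₂ := solvesODE_f₂ a b
  rw [SolvesODE] at h₁ h₂
  linear_combination f₁ a b * h₂ - f₂ a b * h₁
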